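/- Let B : (T,∞) → ℝ^{n×n} be a bounded measurable matrix-valued function such that ∫_T^t μ(B(τ)) dτ → −∞ as t → ∞, where μ(B) is the largest eigenvalue of (B + Bᵗ)/2. Then every solution φ of the linear system dφ/dt = B(t)φ tends to zero as t → ∞; that is, the null solution is asymptotically stable and all solutions have limit 0. -/

import Mathlib

/-!
Along a solution, `⟪φ, Bφ⟫ ≤ μ(B) |φ|²` because `μ(B)` is the top of the spectrum of the
symmetric part of `B`. Hence the absolutely continuous function `|φ(t)|² exp (-2 ∫ₐᵗ μ(B))` has
a.e. nonpositive derivative, so it is nonincreasing, which is Grönwall's estimate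
`|φ(t)| ≤ |φ(a)| exp ∫ₐᵗ μ(B) → 0`. The integral is meaningful because `μ` is Lipschitz in the
entries of the matrix, so `μ ∘ B` is measurable and bounded.
-/

open MeasureTheory Set Filter
open scoped Topology

noncomputable section

/-- The Euclidean norm of a vector `v : Fin n → ℝ`. -/
def euclNorm {n : ℕ} (v : Fin n → ℝ) : ℝ := Real.sqrt (∑ i, v i ^ 2)

/-- `μ(B)`: the largest eigenvalue of the symmetric part `(B + Bᵗ)/2` of `B`. -/
def mu {n : ℕ} (B : Matrix (Fin n) (Fin n) ℝ) : ℝ :=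
  sSup {c : ℝ | Module.End.HasEigenvalue
    (Matrix.toLin' (((2 : ℝ)⁻¹) • (B + B.transpose))) c}

/-- A solution of `dφ/dt = B(t)φ` on `(T,∞)` for bounded measurable `B`:
a Lipschitz function satisfying the equation almost everywhere. -/
def IsAESol (n : ℕ) (T : ℝ) (B : ℝ → Matrix (Fin n) (Fin n) ℝ)
    (φ : ℝ → Fin n → ℝ) : Prop :=
  (∃ L : NNReal, LipschitzOnWith L φ (Ioi T)) ∧
    ∀ᵐ t ∂(volume.restrict (Ioi T)), HasDerivAt φ ((B t).mulVec (φ t)) t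


namespace Matrix

variable {ι : Type*}

def symmPart (A : Matrix ι ι ℝ) : Matrix ι ι ℝ := (2 : ℝ)⁻¹ • (A + Aᵀ)

lemma isHermitian_symmPart (A : Matrix ι ι ℝ) : A.symmPart.IsHermitian := by
  rw [IsHermitian, symmPart, conjTranspose_eq_transpose_of_trivial, transpose_smul,
    transpose_add, transpose_transpose, add_comm]

lemma dotProduct_symmPart_mulVec [Fintype ι] (A : Matrix ι ι ℝ) (v : ι → ℝ) :
    v ⬝ᵥ A.symmPart *ᵥ v = v ⬝ᵥ A *ᵥ v := by
  rw [symmPart, smul_mulVec, add_mulVec, dotProduct_smul, dotProduct_add,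
    dotProduct_transpose_mulVec, smul_eq_mul]
  ring

lemma abs_dotProduct_mulVec_le [Fintype ι] [Nonempty ι] (M : Matrix ι ι ℝ) (v : ι → ℝ) {δ : ℝ}
    (hM : ∀ i j, |M i j| ≤ δ) : |v ⬝ᵥ M *ᵥ v| ≤ Fintype.card ι * δ * (v ⬝ᵥ v) := by
  have hδ : 0 ≤ δ := (abs_nonneg _).trans (hM (Classical.arbitrary ι) (Classical.arbitrary ι))
  calc |v ⬝ᵥ M *ᵥ v| = |∑ i, ∑ j, v i * M i j * v j| := by
        simp only [dotProduct, mulVec, Finset.mul_sum, mul_assoc]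
    _ ≤ ∑ i, ∑ j, |v i| * δ * |v j| := by
        refine (Finset.abs_sum_le_sum_abs _ _).trans (Finset.sum_le_sum fun i _ => ?_)
        refine (Finset.abs_sum_le_sum_abs _ _).trans (Finset.sum_le_sum fun j _ => ?_)
        rw [abs_mul, abs_mul]
        gcongr
        exact hM i j
    _ = δ * (∑ i, |v i|) ^ 2 := by
        rw [sq, Finset.sum_mul_sum, Finset.mul_sum]
        simp only [Finset.mul_sum]
        congr! 2 with i _ j _
        ring
    _ ≤ δ * (Fintype.card ι * ∑ i, |v i| ^ 2) := by
        gcongr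
        exact sq_sum_le_card_mul_sum_sq
    _ = Fintype.card ι * δ * (v ⬝ᵥ v) := by
        simp only [sq_abs, dotProduct, ← sq]
        ring

end Matrix

open Matrix

section mu

variable {n : ℕ}

lemma mu_eq_sSup_spectrum_symmPart (A : Matrix (Fin n) (Fin n) ℝ) :
    mu A = sSup (spectrum ℝ A.symmPart) := by
  simp only [mu, Module.End.hasEigenvalue_iff_mem_spectrum, spectrum_toLin']
  rfl

lemma dotProduct_mulVec_le_mu (A : Matrix (Fin n) (Fin n) ℝ) (v : Fin n → ℝ) :
    v ⬝ᵥ A *ᵥ v ≤ mu A * (v ⬝ᵥ v) := by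
  have hP : (algebraMap ℝ _ (mu A) - A.symmPart).IsHermitian :=
    (isHermitian_diagonal _).sub A.isHermitian_symmPart
  -- the spectrum of `mu A - symmPart A` is `mu A - spectrum (symmPart A) ⊆ [0, ∞)`
  have hPsd : (algebraMap ℝ _ (mu A) - A.symmPart).PosSemidef := by
    refine hP.posSemidef_iff_eigenvalues_nonneg.2 fun i => ?_
    obtain ⟨c, hc, hi⟩ : ∃ c ∈ spectrum ℝ A.symmPart, mu A - c = hP.eigenvalues i := by
      have := hP.spectrum_real_eq_range_eigenvalues ▸ Set.mem_range_self i
      rw [← spectrum.singleton_sub_eq] at this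
      simpa [Set.mem_sub, eq_comm] using this
    rw [Pi.zero_apply, ← hi, mu_eq_sSup_spectrum_symmPart, sub_nonneg]
    exact le_csSup finite_real_spectrum.bddAbove hc
  have := hPsd.dotProduct_mulVec_nonneg v
  rwa [sub_mulVec, star_trivial, dotProduct_sub, dotProduct_symmPart_mulVec,
    Algebra.algebraMap_eq_smul_one, smul_mulVec, one_mulVec, dotProduct_smul, smul_eq_mul,
    sub_nonneg] at this

variable [NeZero n]

lemma exists_dotProduct_mulVec_eq_mu (A : Matrix (Fin n) (Fin n) ℝ) :
    ∃ v : Fin n → ℝ, v ⬝ᵥ v = 1 ∧ v ⬝ᵥ A *ᵥ v = mu A := by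
  have hS := A.isHermitian_symmPart
  obtain ⟨i, hi⟩ : mu A ∈ Set.range hS.eigenvalues := by
    rw [mu_eq_sSup_spectrum_symmPart, ← hS.spectrum_real_eq_range_eigenvalues]
    refine Set.Nonempty.csSup_mem ?_ finite_real_spectrum
    rw [hS.spectrum_real_eq_range_eigenvalues]
    exact Set.range_nonempty _
  refine ⟨hS.eigenvectorBasis i, ?_, ?_⟩
  · have := real_inner_self_eq_norm_sq (hS.eigenvectorBasis i)
    rwa [hS.eigenvectorBasis.orthonormal.1 i, EuclideanSpace.inner_eq_star_dotProduct, one_pow,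
      star_trivial] at this
  · rw [← dotProduct_symmPart_mulVec, ← hi, hS.eigenvalues_eq]
    simp

lemma mu_le_mu_add (A A' : Matrix (Fin n) (Fin n) ℝ) {δ : ℝ}
    (hδ : ∀ i j, |A i j - A' i j| ≤ δ) :
    mu A ≤ mu A' + n * δ := by
  obtain ⟨v, hv, hAv⟩ := exists_dotProduct_mulVec_eq_mu A
  have hA' := dotProduct_mulVec_le_mu A' v
  have hdiff := abs_le.1 (abs_dotProduct_mulVec_le (A - A') v hδ)
  rw [sub_mulVec, dotProduct_sub, Fintype.card_fin] at hdiff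
  rw [hv] at hA' hdiff
  linarith [hdiff.2]

lemma abs_mu_le (A : Matrix (Fin n) (Fin n) ℝ) {C : ℝ} (hC : ∀ i j, |A i j| ≤ C) :
    |mu A| ≤ n * C := by
  obtain ⟨v, hv, hAv⟩ := exists_dotProduct_mulVec_eq_mu A
  simpa [hAv, hv] using abs_dotProduct_mulVec_le A v hC

lemma lipschitzWith_mu : LipschitzWith n fun A : Fin n → Fin n → ℝ => mu (Matrix.of A) := by
  refine LipschitzWith.of_le_add_mul _ fun A A' => mu_le_mu_add _ _ fun i j => ?_
  rw [← Real.dist_eq]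
  exact (dist_le_pi_dist (A i) (A' i) j).trans (dist_le_pi_dist A A' i)

lemma measurable_mu_comp {B : ℝ → Matrix (Fin n) (Fin n) ℝ}
    (hB : ∀ i j, Measurable fun t => B t i j) : Measurable fun t => mu (B t) :=
  lipschitzWith_mu.continuous.measurable.comp
    (measurable_pi_lambda _ fun i => measurable_pi_lambda _ fun j => hB i j)

end mu

namespace AbsolutelyContinuousOnInterval

theorem comp_lipschitzOnWith {X Y : Type*} [PseudoMetricSpace X] [PseudoMetricSpace Y]
    {f : ℝ → X} {g : X → Y} {s : Set X} {K : NNReal} {a b : ℝ}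
    (hg : LipschitzOnWith K g s) (hfs : MapsTo f (uIcc a b) s)
    (hf : AbsolutelyContinuousOnInterval f a b) :
    AbsolutelyContinuousOnInterval (g ∘ f) a b := by
  have hKf := Tendsto.const_mul (K : ℝ) hf
  rw [mul_zero] at hKf
  refine squeeze_zero' (Eventually.of_forall fun E => Finset.sum_nonneg fun _ _ => dist_nonneg)
    ?_ hKf
  filter_upwards [mem_inf_of_right (mem_principal_self (disjWithin a b))] with E hE
  rw [Finset.mul_sum]
  gcongr with i hi
  exact hg.dist_le_mul _ (hfs (hE.1 i hi).1) _ (hfs (hE.1 i hi).2)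

theorem contDiff_comp {E F : Type*} [NormedAddCommGroup E] [NormedSpace ℝ E] [ProperSpace E]
    [NormedAddCommGroup F] [NormedSpace ℝ F] {f : ℝ → E} {g : E → F} {a b : ℝ}
    (hg : ContDiff ℝ 1 g) (hf : AbsolutelyContinuousOnInterval f a b) :
    AbsolutelyContinuousOnInterval (g ∘ f) a b := by
  obtain ⟨C, hC⟩ := hf.exists_bound
  obtain ⟨K, hK⟩ := hg.contDiffOn.exists_lipschitzOnWith one_ne_zero (convex_closedBall 0 C)
    (isCompact_closedBall 0 C)
  exact hf.comp_lipschitzOnWith hK fun x hx => mem_closedBall_zero_iff.2 (hC x hx)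

theorem le_of_ae_deriv_nonpos {f : ℝ → ℝ} {a b : ℝ} (hf : AbsolutelyContinuousOnInterval f a b)
    (hab : a ≤ b) (hderiv : ∀ᵐ t, t ∈ Ioo a b → deriv f t ≤ 0) : f b ≤ f a := by
  rw [← sub_nonpos, ← hf.integral_deriv_eq_sub, intervalIntegral.integral_of_le hab]
  refine integral_nonpos_of_ae ?_
  rw [← Measure.restrict_congr_set Ioo_ae_eq_Ioc, EventuallyLE,
    ae_restrict_iff' measurableSet_Ioo]
  exact hderiv

theorem le_mul_exp_integral {u g : ℝ → ℝ} {a b : ℝ} (hu : AbsolutelyContinuousOnInterval u a b)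
    (hab : a ≤ b) (hg : IntervalIntegrable g volume a b)
    (hderiv : ∀ᵐ t, t ∈ Ioo a b → deriv u t ≤ g t * u t) :
    u b ≤ u a * Real.exp (∫ t in a..b, g t) := by
  have hM : AbsolutelyContinuousOnInterval (fun x => -∫ t in a..x, g t) a b :=
    (hg.absolutelyContinuousOnInterval_intervalIntegral left_mem_uIcc).fun_neg
  have hE := hM.contDiff_comp (E := ℝ) (F := ℝ) Real.contDiff_exp
  have hG : AbsolutelyContinuousOnInterval
      (fun x => u x * Real.exp (-∫ t in a..x, g t)) a b := hu.mul hE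
  have key := hG.le_of_ae_deriv_nonpos hab ?_
  · rwa [intervalIntegral.integral_same, neg_zero, Real.exp_zero, mul_one,
      ← le_div_iff₀ (Real.exp_pos _), div_eq_mul_inv, ← Real.exp_neg, neg_neg] at key
  filter_upwards [hu.ae_differentiableAt, hg.ae_hasDerivAt_integral, hderiv]
    with t hut hMt ht htab
  have htI : t ∈ uIcc a b := by
    rw [uIcc_of_le hab]
    exact Ioo_subset_Icc_self htab
  rw [((hut htI).hasDerivAt.fun_mul ((hMt htI a left_mem_uIcc).fun_neg.exp)).deriv]
  nlinarith [Real.exp_pos (-∫ s in a..t, g s), ht htab]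

end AbsolutelyContinuousOnInterval

lemma euclNorm_eq_sqrt_dotProduct {n : ℕ} (v : Fin n → ℝ) : euclNorm v = √(v ⬝ᵥ v) := by
  simp only [euclNorm, dotProduct, sq]

lemma HasDerivAt.dotProduct_self {ι : Type*} [Fintype ι] {φ : ℝ → ι → ℝ} {φ' : ι → ℝ} {t : ℝ}
    (h : HasDerivAt φ φ' t) : HasDerivAt (fun s => φ s ⬝ᵥ φ s) (2 * (φ t ⬝ᵥ φ')) t := by
  refine (HasDerivAt.fun_sum (u := Finset.univ) fun i _ =>
    (hasDerivAt_pi.1 h i).fun_mul (hasDerivAt_pi.1 h i)).congr_deriv ?_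
  simp only [dotProduct, Finset.mul_sum]
  exact Finset.sum_congr rfl fun i _ => by ring

lemma intervalIntegrable_mu_comp {n : ℕ} [NeZero n] {T C a b : ℝ}
    {B : ℝ → Matrix (Fin n) (Fin n) ℝ} (hB_meas : ∀ i j, Measurable fun t => B t i j)
    (hC : ∀ t ∈ Ioi T, ∀ i j, |B t i j| ≤ C) (ha : T ≤ a) (hb : T ≤ b) :
    IntervalIntegrable (fun t => mu (B t)) volume a b := by
  refine (intervalIntegrable_const (c := (n * C : ℝ))).mono_fun
    (measurable_mu_comp hB_meas).aestronglyMeasurable ?_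
  refine (ae_restrict_iff' measurableSet_uIoc).2 (Eventually.of_forall fun t ht => ?_)
  have htT : t ∈ Ioi T := lt_of_le_of_lt (le_min ha hb) ht.1
  simp only [Real.norm_eq_abs]
  exact (abs_mu_le (B t) (hC t htT)).trans (le_abs_self _)

namespace IsAESol

variable {n : ℕ} {T a b : ℝ} {B : ℝ → Matrix (Fin n) (Fin n) ℝ} {φ : ℝ → Fin n → ℝ}

lemma dotProduct_self_le_mul_exp_integral (hφ : IsAESol n T B φ)
    (hμ : IntervalIntegrable (fun t => mu (B t)) volume a b) (ha : T < a) (hab : a ≤ b) :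
    φ b ⬝ᵥ φ b ≤ φ a ⬝ᵥ φ a * Real.exp (∫ t in a..b, 2 * mu (B t)) := by
  obtain ⟨⟨L, hL⟩, hode⟩ := hφ
  have hsub : Icc a b ⊆ Ioi T := fun t ht => ha.trans_le ht.1
  have hac : AbsolutelyContinuousOnInterval (fun t => φ t ⬝ᵥ φ t) a b :=
    (hL.mono (uIcc_of_le hab ▸ hsub)).absolutelyContinuousOnInterval.contDiff_comp
      (g := fun v => v ⬝ᵥ v) (by unfold dotProduct; fun_prop)
  refine hac.le_mul_exp_integral hab (hμ.const_mul 2) ?_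
  filter_upwards [(ae_restrict_iff' measurableSet_Ioi).1 hode] with t ht htab
  have hderiv := (ht (hsub (Ioo_subset_Icc_self htab))).dotProduct_self
  rw [hderiv.deriv, mul_assoc]
  exact mul_le_mul_of_nonneg_left (dotProduct_mulVec_le_mu _ _) zero_le_two

lemma euclNorm_le_mul_exp_integral (hφ : IsAESol n T B φ)
    (hμ : IntervalIntegrable (fun t => mu (B t)) volume a b) (ha : T < a) (hab : a ≤ b) :
    euclNorm (φ b) ≤ euclNorm (φ a) * Real.exp (∫ t in a..b, mu (B t)) := by
  have h := hφ.dotProduct_self_le_mul_exp_integral hμ ha hab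
  rw [intervalIntegral.integral_const_mul, two_mul, Real.exp_add, ← sq] at h
  calc euclNorm (φ b) = √(φ b ⬝ᵥ φ b) := euclNorm_eq_sqrt_dotProduct _
    _ ≤ √(φ a ⬝ᵥ φ a * Real.exp (∫ t in a..b, mu (B t)) ^ 2) := Real.sqrt_le_sqrt h
    _ = euclNorm (φ a) * Real.exp (∫ t in a..b, mu (B t)) := by
      rw [Real.sqrt_mul' _ (sq_nonneg _), Real.sqrt_sq (Real.exp_pos _).le,
        euclNorm_eq_sqrt_dotProduct]

end IsAESol

/-- **Asymptotic stability criterion (proof of Corollary 3).** If `B` is bounded measurable on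
`(T,∞)` and `∫_T^t μ(B(τ)) dτ → −∞` as `t → ∞`, then every (Lipschitz, a.e.) solution `φ` of
`dφ/dt = B(t)φ` tends to zero as `t → ∞`. -/
theorem tendsto_zero_of_mu_integral_tendsto_atBot
    (n : ℕ) (T : ℝ)
    (B : ℝ → Matrix (Fin n) (Fin n) ℝ)
    (hB_meas : ∀ i j, Measurable fun t => B t i j)
    (hB_bdd : ∃ C : ℝ, ∀ t ∈ Ioi T, ∀ i j, |B t i j| ≤ C)
    (hmu : Tendsto (fun t => ∫ τ in T..t, mu (B τ)) atTop atBot) :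
    ∀ φ : ℝ → Fin n → ℝ, IsAESol n T B φ →
      Tendsto (fun t => euclNorm (φ t)) atTop (𝓝 0) := by
  intro φ hφ
  rcases Nat.eq_zero_or_pos n with rfl | hn
  · simp [euclNorm]
  have : NeZero n := ⟨hn.ne'⟩
  obtain ⟨C, hC⟩ := hB_bdd
  have hint {a b : ℝ} (ha : T ≤ a) (hb : T ≤ b) :
      IntervalIntegrable (fun t => mu (B t)) volume a b :=
    intervalIntegrable_mu_comp hB_meas hC ha hb
  set a := T + 1
  have hTa : T < a := lt_add_one T
  have hmu_a : Tendsto (fun t => ∫ τ in a..t, mu (B τ)) atTop atBot := by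
    refine (tendsto_atBot_add_const_right _ (-∫ τ in T..a, mu (B τ)) hmu).congr' ?_
    filter_upwards [eventually_ge_atTop T] with t ht
    rw [← sub_eq_add_neg, intervalIntegral.integral_interval_sub_left (hint le_rfl ht)
      (hint le_rfl hTa.le)]
  have hbound : Tendsto (fun t => euclNorm (φ a) * Real.exp (∫ τ in a..t, mu (B τ)))
      atTop (𝓝 0) := by
    simpa using (Real.tendsto_exp_atBot.comp hmu_a).const_mul (euclNorm (φ a))
  refine squeeze_zero' (Eventually.of_forall fun t => Real.sqrt_nonneg _) ?_ hbound
  filter_upwards [eventually_ge_atTop a] with t ht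
  exact hφ.euclNorm_le_mul_exp_integral (hint hTa.le (hTa.le.trans ht)) hTa ht
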